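/- Let H and K₀ be real separable Hilbert spaces, A and C positive bounded operators on H, V : K₀ → H an isometry (V^*V = I) such that P := V V^* is the orthogonal projection of H onto the closure of the range of C, μ > 0, and h_μ(A) := V (V^* A V + μ I)^{-1} V^*. Then ‖h_μ(A)(A + μI)‖ ≤ 1 + ‖(A + μI)^{1/2}(C + μI)^{-1/2}‖. -/

import Mathlib

open ContinuousLinearMap

/-- `S` is the positive square root of the positive operator `T`. -/
def IsSqrtOf {E : Type*} [NormedAddCommGroup E] [InnerProductSpace ℝ E]
    [CompleteSpace E] (S T : E →L[ℝ] E) : Prop :=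
  S.IsPositive ∧ S ∘L S = T

/-- `S` is the inverse `T⁻¹` of the operator `T`. -/
def IsInvOf {E : Type*} [NormedAddCommGroup E] [InnerProductSpace ℝ E]
    [CompleteSpace E] (S T : E →L[ℝ] E) : Prop :=
  S ∘L T = 1 ∧ T ∘L S = 1

/-- `S` is the inverse square root `T^{-1/2}` of the positive invertible operator `T`,
i.e. `S` is positive and `S ∘ S = T⁻¹`. -/
def IsInvSqrtOf {E : Type*} [NormedAddCommGroup E] [InnerProductSpace ℝ E]
    [CompleteSpace E] (S T : E →L[ℝ] E) : Prop :=
  S.IsPositive ∧ IsInvOf (S ∘L S) T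

/-- `p` is the family of real powers `t ↦ A ^ t` (for `t ≥ 0`) of the positive operator `A`,
given by the continuous functional calculus; it is characterized by the semigroup property
together with positivity, continuity, `p 0 = 1` and `p 1 = A`. -/
def IsPowerFamilyOf {E : Type*} [NormedAddCommGroup E] [InnerProductSpace ℝ E]
    [CompleteSpace E] (A : E →L[ℝ] E) (p : ℝ → E →L[ℝ] E) : Prop :=
  p 0 = 1 ∧ p 1 = A ∧ (∀ s t : ℝ, 0 ≤ s → 0 ≤ t → p (s + t) = p s ∘L p t) ∧
    (∀ t : ℝ, 0 ≤ t → (p t).IsPositive) ∧ ContinuousOn p (Set.Ici (0 : ℝ))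

/-! With `P = V V^*`, `h = h_μ(A)` and `B = A + μ`, one has `h B P = P`, and since `C` vanishes
on the range of `1 - P`, `(C + μ)^{-1} (1 - P) = μ⁻¹ (1 - P)`. Hence
`h B = P + μ (h B^{1/2}) (B^{1/2} (C + μ)^{-1/2}) ((C + μ)^{-1/2} (1 - P))`, and both outer
factors have norm at most `μ^{-1/2}` by the C⋆-identity:
`‖h B^{1/2}‖² = ‖h B h‖ = ‖h‖ ≤ μ⁻¹` and `‖(C + μ)^{-1/2} (1 - P)‖² = μ⁻¹ ‖1 - P‖ ≤ μ⁻¹`. -/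

open scoped RealInnerProductSpace

theorem mul_eq_add_smul_of_mul_mul_eq {R : Type*} [Ring R] [Algebra ℝ R] {x b p s t : R} {μ : ℝ}
    (hμ : μ ≠ 0) (hxbp : x * (b * p) = p) (hs : s * s = b)
    (ht : t * t * (1 - p) = μ⁻¹ • (1 - p)) :
    x * b = p + μ • (x * s * (s * t * (t * (1 - p)))) := by
  have hrest : x * s * (s * t * (t * (1 - p))) = x * b * (t * t * (1 - p)) := by
    simp only [← hs, mul_assoc]
  calc x * b = x * (b * p) + x * b * (1 - p) := by noncomm_ring
    _ = p + μ • (x * s * (s * t * (t * (1 - p)))) := by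
      rw [hxbp, hrest, ht, mul_smul_comm, smul_smul, mul_inv_cancel₀ hμ, one_smul]

section

variable {H K : Type*} [NormedAddCommGroup H] [InnerProductSpace ℝ H]
  [NormedAddCommGroup K] [InnerProductSpace ℝ K]

namespace ContinuousLinearMap

theorem norm_comp_comp_le_of_sq_le {𝕜 E F G J : Type*}
    [NontriviallyNormedField 𝕜] [SeminormedAddCommGroup E] [SeminormedAddCommGroup F]
    [SeminormedAddCommGroup G] [SeminormedAddCommGroup J] [NormedSpace 𝕜 E] [NormedSpace 𝕜 F]
    [NormedSpace 𝕜 G] [NormedSpace 𝕜 J] {X : G →L[𝕜] J} {M : F →L[𝕜] G} {Y : E →L[𝕜] F} {c : ℝ}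
    (hX : ‖X‖ ^ 2 ≤ c) (hY : ‖Y‖ ^ 2 ≤ c) : ‖X ∘L M ∘L Y‖ ≤ c * ‖M‖ := by
  have hXY : ‖X‖ * ‖Y‖ ≤ c := by nlinarith [sq_nonneg (‖X‖ - ‖Y‖)]
  calc ‖X ∘L M ∘L Y‖ ≤ ‖X‖ * (‖M‖ * ‖Y‖) :=
        (opNorm_comp_le _ _).trans (by gcongr; exact opNorm_comp_le _ _)
    _ = ‖X‖ * ‖Y‖ * ‖M‖ := by ring
    _ ≤ c * ‖M‖ := by gcongr

theorem comp_eq_inv_smul_of_comp_add_smul_one {S C Q : H →L[ℝ] H} {μ : ℝ} (hμ : μ ≠ 0)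
    (hS : S ∘L (C + μ • 1) = 1) (hCQ : C ∘L Q = 0) : S ∘L Q = μ⁻¹ • Q := by
  have hQ : (C + μ • 1) ∘L Q = μ • Q := by rw [add_comp, hCQ, smul_comp, zero_add]; rfl
  calc S ∘L Q = μ⁻¹ • S ∘L ((C + μ • 1) ∘L Q) := by
        rw [hQ, comp_smul, smul_smul, inv_mul_cancel₀ hμ, one_smul]
    _ = μ⁻¹ • Q := by rw [← comp_assoc, hS]; rfl

theorem IsPositive.mul_norm_le_norm_add_smul_one_apply {T : H →L[ℝ] H} (hT : T.IsPositive)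
    (μ : ℝ) (x : H) : μ * ‖x‖ ≤ ‖(T + μ • 1) x‖ := by
  have key : μ * (‖x‖ * ‖x‖) ≤ ‖(T + μ • 1) x‖ * ‖x‖ :=
    calc μ * (‖x‖ * ‖x‖) ≤ ⟪T x, x⟫ + μ * ⟪x, x⟫ := by
          rw [real_inner_self_eq_norm_mul_norm]
          linarith [hT.inner_nonneg_left x]
      _ = ⟪(T + μ • 1) x, x⟫ := by simp [inner_add_left, real_inner_smul_left]
      _ ≤ ‖(T + μ • 1) x‖ * ‖x‖ := real_inner_le_norm _ _
  rcases (norm_nonneg x).eq_or_lt with hx | hx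
  · rw [← hx, mul_zero]; exact norm_nonneg _
  · nlinarith

theorem IsPositive.norm_le_inv_of_add_smul_one_comp_eq_one {T W : H →L[ℝ] H}
    (hT : T.IsPositive) {μ : ℝ} (hμ : 0 < μ) (hW : (T + μ • 1) ∘L W = 1) : ‖W‖ ≤ μ⁻¹ := by
  refine opNorm_le_bound _ (inv_nonneg.2 hμ.le) fun x => ?_
  rw [inv_mul_eq_div, le_div_iff₀' hμ]
  have := hT.mul_norm_le_norm_add_smul_one_apply μ (W x)
  rw [← comp_apply, hW] at this
  simpa using this

variable [CompleteSpace H] [CompleteSpace K]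

theorem isStarProjection_comp_adjoint {V : K →L[ℝ] H} (hV : adjoint V ∘L V = 1) :
    IsStarProjection (V ∘L adjoint V) where
  isIdempotentElem := by
    change V ∘L (adjoint V ∘L V) ∘L adjoint V = V ∘L adjoint V
    rw [hV]; rfl
  isSelfAdjoint := by rw [isSelfAdjoint_iff', adjoint_comp, adjoint_adjoint]

theorem comp_one_sub_eq_zero_of_range_le {C P : H →L[ℝ] H} (hC : IsSelfAdjoint C)
    (hP : IsStarProjection P)
    (h : LinearMap.range (C : H →ₗ[ℝ] H) ≤ LinearMap.range (P : H →ₗ[ℝ] H)) :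
    C ∘L (1 - P) = 0 := by
  have hPC : P ∘L C = C := coe_inj.1 <| (LinearMap.IsIdempotentElem.comp_eq_right_iff
      (isIdempotentElem_toLinearMap_iff.2 hP.isIdempotentElem) _).2 h
  have hCP : C ∘L P = C := by
    simpa [adjoint_comp, hC.adjoint_eq, hP.isSelfAdjoint.adjoint_eq] using congrArg adjoint hPC
  rw [comp_sub, hCP, sub_eq_zero]
  rfl

theorem sq_norm_comp_le_of_comp_comp_eq_smul {S Q : H →L[ℝ] H} (hS : IsSelfAdjoint S)
    (hQ : IsStarProjection Q) {c : ℝ} (hc : 0 ≤ c) (h : (S ∘L S) ∘L Q = c • Q) :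
    ‖S ∘L Q‖ ^ 2 ≤ c := by
  calc ‖S ∘L Q‖ ^ 2 = ‖Q ∘L (S ∘L S) ∘L Q‖ := by
        rw [sq, ← norm_adjoint_comp_self, adjoint_comp, hS.adjoint_eq,
          hQ.isSelfAdjoint.adjoint_eq]
        simp only [comp_assoc]
    _ = c * ‖Q‖ := by
        rw [h, comp_smul, show Q ∘L Q = Q from hQ.isIdempotentElem.eq, norm_smul,
          Real.norm_of_nonneg hc]
    _ ≤ c := mul_le_of_le_one_right hc (hQ.norm_le Q)

section Compression

variable {V : K →L[ℝ] H} (hV : adjoint V ∘L V = 1) (A : H →L[ℝ] H) (μ : ℝ)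
include hV

theorem adjoint_comp_add_smul_one_comp :
    adjoint V ∘L (A + μ • 1) ∘L V = adjoint V ∘L A ∘L V + μ • 1 := by
  rw [add_comp, comp_add, smul_comp, comp_smul, ← hV]
  rfl

theorem compression_comp_comp_self_comp_adjoint {W : K →L[ℝ] K}
    (hW : W ∘L (adjoint V ∘L A ∘L V + μ • 1) = 1) :
    (V ∘L W ∘L adjoint V) ∘L (A + μ • 1) ∘L (V ∘L adjoint V) = V ∘L adjoint V := by
  calc _ = V ∘L (W ∘L (adjoint V ∘L (A + μ • 1) ∘L V)) ∘L adjoint V := by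
        simp only [comp_assoc]
    _ = V ∘L adjoint V := by rw [adjoint_comp_add_smul_one_comp hV, hW]; rfl

theorem compression_comp_comp_compression {W : K →L[ℝ] K}
    (hW : (adjoint V ∘L A ∘L V + μ • 1) ∘L W = 1) :
    (V ∘L W ∘L adjoint V) ∘L (A + μ • 1) ∘L (V ∘L W ∘L adjoint V) = V ∘L W ∘L adjoint V := by
  calc _ = V ∘L W ∘L ((adjoint V ∘L (A + μ • 1) ∘L V) ∘L W) ∘L adjoint V := by
        simp only [comp_assoc]
    _ = V ∘L W ∘L adjoint V := by rw [adjoint_comp_add_smul_one_comp hV, hW]; rfl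

omit A μ in
theorem norm_le_one_of_adjoint_comp_self : ‖V‖ ≤ 1 :=
  opNorm_le_bound _ zero_le_one fun x => by rw [(norm_map_iff_adjoint_comp_self V).2 hV x, one_mul]

omit A μ in
theorem norm_compression_le (W : K →L[ℝ] K) : ‖V ∘L W ∘L adjoint V‖ ≤ ‖W‖ := by
  have hV₁ := norm_le_one_of_adjoint_comp_self hV
  have hV₂ : ‖adjoint V‖ ≤ 1 := by rwa [LinearIsometryEquiv.norm_map]
  calc ‖V ∘L W ∘L adjoint V‖ ≤ ‖V‖ * (‖W‖ * ‖adjoint V‖) :=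
        (opNorm_comp_le _ _).trans (by gcongr; exact opNorm_comp_le _ _)
    _ ≤ 1 * (‖W‖ * 1) := by gcongr
    _ = ‖W‖ := by ring

end Compression

end ContinuousLinearMap

theorem IsInvOf.isSelfAdjoint [CompleteSpace H] {S T : H →L[ℝ] H} (h : IsInvOf S T)
    (hT : IsSelfAdjoint T) : IsSelfAdjoint S :=
  letI : Invertible T := ⟨S, h.1, h.2⟩
  (IsSelfAdjoint.invOf_iff T).2 hT

theorem sq_norm_compression_comp_sqrt_le [CompleteSpace H] [CompleteSpace K] {V : K →L[ℝ] H}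
    (hV : adjoint V ∘L V = 1) {A S : H →L[ℝ] H} {W : K →L[ℝ] K} (hA : A.IsPositive) {μ : ℝ}
    (hμ : 0 < μ) (hW : IsInvOf W (adjoint V ∘L A ∘L V + μ • 1)) (hS : IsSqrtOf S (A + μ • 1)) :
    ‖(V ∘L W ∘L adjoint V) ∘L S‖ ^ 2 ≤ μ⁻¹ := by
  have hT : (adjoint V ∘L A ∘L V).IsPositive := hA.adjoint_conj V
  have hTμ : IsSelfAdjoint (adjoint V ∘L A ∘L V + μ • (1 : K →L[ℝ] K)) :=
    (hT.add (isPositive_one.smul_of_nonneg hμ.le)).isSelfAdjoint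
  set h := V ∘L W ∘L adjoint V
  have hh : IsSelfAdjoint h := (hW.isSelfAdjoint hTμ).conj_adjoint V
  have hS' := hS.1.isSelfAdjoint
  calc ‖h ∘L S‖ ^ 2 = ‖S ∘L h‖ ^ 2 := by
        rw [← LinearIsometryEquiv.norm_map adjoint (h ∘L S), adjoint_comp, hh.adjoint_eq,
          hS'.adjoint_eq]
    _ = ‖h ∘L (S ∘L S) ∘L h‖ := by
        rw [sq, ← norm_adjoint_comp_self, adjoint_comp, hh.adjoint_eq, hS'.adjoint_eq]
        simp only [comp_assoc]
    _ = ‖h‖ := by rw [hS.2, compression_comp_comp_compression hV A μ hW.2]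
    _ ≤ ‖W‖ := norm_compression_le hV W
    _ ≤ μ⁻¹ := hT.norm_le_inv_of_add_smul_one_comp_eq_one hμ hW.2

end

theorem stmt8_general {H K₀ : Type*}
    [NormedAddCommGroup H] [InnerProductSpace ℝ H] [CompleteSpace H]
    [NormedAddCommGroup K₀] [InnerProductSpace ℝ K₀] [CompleteSpace K₀]
    (A C : H →L[ℝ] H) (hA : A.IsPositive) (hC : C.IsPositive)
    (V : K₀ →L[ℝ] H) (hV : (adjoint V) ∘L V = 1)
    (hPrange : LinearMap.range ((V ∘L (adjoint V) : H →L[ℝ] H) : H →ₗ[ℝ] H) = (LinearMap.range (C : H →ₗ[ℝ] H)).topologicalClosure)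
    (mu : ℝ) (hmu : 0 < mu)
    (Winv : K₀ →L[ℝ] K₀)
    (hWinv : IsInvOf Winv ((adjoint V) ∘L A ∘L V + mu • (1 : K₀ →L[ℝ] K₀)))
    (SA : H →L[ℝ] H) (hSA : IsSqrtOf SA (A + mu • (1 : H →L[ℝ] H)))
    (SCinv : H →L[ℝ] H) (hSCinv : IsInvSqrtOf SCinv (C + mu • (1 : H →L[ℝ] H))) :
    ‖(V ∘L Winv ∘L (adjoint V)) ∘L (A + mu • (1 : H →L[ℝ] H))‖ ≤ 1 + ‖SA ∘L SCinv‖ := by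
  set P := V ∘L adjoint V
  have hP : IsStarProjection P := isStarProjection_comp_adjoint hV
  have hCP : C ∘L (1 - P) = 0 := comp_one_sub_eq_zero_of_range_le hC.isSelfAdjoint hP
    (hPrange ▸ Submodule.le_topologicalClosure _)
  have hSC : (SCinv ∘L SCinv) ∘L (1 - P) = mu⁻¹ • (1 - P) :=
    comp_eq_inv_smul_of_comp_add_smul_one hmu.ne' hSCinv.2.1 hCP
  rw [show (V ∘L Winv ∘L adjoint V) ∘L (A + mu • 1) = _ from mul_eq_add_smul_of_mul_mul_eq
    hmu.ne' (compression_comp_comp_self_comp_adjoint hV A mu hWinv.1) hSA.2 hSC]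
  have hleft := sq_norm_compression_comp_sqrt_le hV hA hmu hWinv hSA
  have hright := sq_norm_comp_le_of_comp_comp_eq_smul hSCinv.1.isSelfAdjoint hP.one_sub
    (inv_nonneg.2 hmu.le) hSC
  calc _ ≤ ‖P‖ + mu * (mu⁻¹ * ‖SA ∘L SCinv‖) := by
        refine (norm_add_le _ _).trans ?_
        rw [norm_smul, Real.norm_of_nonneg hmu.le]
        gcongr
        exact norm_comp_comp_le_of_sq_le hleft hright
    _ ≤ 1 + ‖SA ∘L SCinv‖ := by
        rw [← mul_assoc, mul_inv_cancel₀ hmu.ne', one_mul]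
        gcongr
        exact hP.norm_le P

/-- For positive operators `A`, `C` on `H`, an isometry `V : K₀ → H` with
`V V^*` the orthogonal projection onto the closure of the range of `C`, `mu > 0` and
`h_mu(A) := V (V^* A V + mu I)⁻¹ V^*`, one has
`‖h_mu(A)(A + mu I)‖ ≤ 1 + ‖(A + mu I)^{1/2} (C + mu I)^{-1/2}‖`. -/
theorem stmt8 {H K₀ : Type*}
    [NormedAddCommGroup H] [InnerProductSpace ℝ H] [CompleteSpace H]
    [TopologicalSpace.SeparableSpace H]
    [NormedAddCommGroup K₀] [InnerProductSpace ℝ K₀] [CompleteSpace K₀]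
    [TopologicalSpace.SeparableSpace K₀]
    (A C : H →L[ℝ] H) (hA : A.IsPositive) (hC : C.IsPositive)
    (V : K₀ →L[ℝ] H) (hV : (adjoint V) ∘L V = 1)
    (hPrange : LinearMap.range ((V ∘L (adjoint V) : H →L[ℝ] H) : H →ₗ[ℝ] H) = (LinearMap.range (C : H →ₗ[ℝ] H)).topologicalClosure)
    (mu : ℝ) (hmu : 0 < mu)
    (Winv : K₀ →L[ℝ] K₀)
    (hWinv : IsInvOf Winv ((adjoint V) ∘L A ∘L V + mu • (1 : K₀ →L[ℝ] K₀)))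
    (SA : H →L[ℝ] H) (hSA : IsSqrtOf SA (A + mu • (1 : H →L[ℝ] H)))
    (SCinv : H →L[ℝ] H) (hSCinv : IsInvSqrtOf SCinv (C + mu • (1 : H →L[ℝ] H))) :
    ‖(V ∘L Winv ∘L (adjoint V)) ∘L (A + mu • (1 : H →L[ℝ] H))‖ ≤ 1 + ‖SA ∘L SCinv‖ :=
  stmt8_general A C hA hC V hV hPrange mu hmu Winv hWinv SA hSA SCinv hSCinv
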